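/- Let (L, δ)/(K, δ) be an extension of differential fields of characteristic p > 0 such that L/K is separably algebraic. Then C_L = L^p · C_K, i.e. the field of constants of L is generated as a field by the p-th powers of L together with the constants of K. -/

import Mathlib

set_option synthInstance.maxHeartbeats 1000000
set_option maxHeartbeats 1000000

open MvPolynomial
noncomputable section
variable {K : Type*} [Field K]

/-- order of a differential polynomial -/
def ordOf (f : MvPolynomial ℕ K) : ℕ := f.vars.sup id

/-- separant -/
def sep (f : MvPolynomial ℕ K) : MvPolynomial ℕ K := pderiv (ordOf f) f

/-- rank of a differential polynomial -/
def rankOf (f : MvPolynomial ℕ K) : ℕ × ℕ := (ordOf f, f.degreeOf (ordOf f))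

/-- the differential ideal generated by f -/
def diffIdeal (D : Derivation ℤ (MvPolynomial ℕ K) (MvPolynomial ℕ K))
    (f : MvPolynomial ℕ K) : Ideal (MvPolynomial ℕ K) :=
  Ideal.span (Set.range fun n : ℕ => (⇑D)^[n] f)

/-- saturation I : s^∞ -/
def saturation {R : Type*} [CommRing R] (J : Ideal R) (s : R) : Ideal R where
  carrier := {h | ∃ m : ℕ, s ^ m * h ∈ J}
  zero_mem' := ⟨0, by simp⟩
  add_mem' := by
    rintro a b ⟨m, hm⟩ ⟨n, hn⟩
    refine ⟨m + n, ?_⟩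
    have h : s ^ (m + n) * (a + b) = s ^ n * (s ^ m * a) + s ^ m * (s ^ n * b) := by ring
    rw [h]
    exact J.add_mem (J.mul_mem_left _ hm) (J.mul_mem_left _ hn)
  smul_mem' := by
    rintro c a ⟨m, hm⟩
    refine ⟨m, ?_⟩
    have h : s ^ m * (c • a) = c * (s ^ m * a) := by rw [smul_eq_mul]; ring
    rw [h]
    exact J.mul_mem_left _ hm

/-- evaluation of a differential polynomial at a point of K -/
def evalD (δ : Derivation ℤ K K) (a : K) (f : MvPolynomial ℕ K) : K :=
  MvPolynomial.eval (fun n => (⇑δ)^[n] a) f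

/-- the field of constants -/
def constants (δ : Derivation ℤ K K) : Subfield K where
  carrier := {a | δ a = 0}
  zero_mem' := by simp
  one_mem' := by simp
  add_mem' := by intro a b ha hb; simp only [Set.mem_setOf_eq] at *; rw [map_add, ha, hb, add_zero]
  mul_mem' := by
    intro a b ha hb; simp only [Set.mem_setOf_eq] at *
    rw [Derivation.leibniz, ha, hb]; simp
  neg_mem' := by intro a ha; simp only [Set.mem_setOf_eq] at *; rw [map_neg, ha, neg_zero]
  inv_mem' := by
    intro a ha
    simp only [Set.mem_setOf_eq] at *
    rcases eq_or_ne a 0 with rfl | h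
    · simp
    · have h1 : a * a⁻¹ = 1 := mul_inv_cancel₀ h
      have h2 : δ (a * a⁻¹) = 0 := by rw [h1]; exact δ.map_one_eq_zero
      rw [Derivation.leibniz, ha] at h2
      simp only [smul_eq_mul, mul_zero, add_zero, zero_mul, smul_zero] at h2
      exact (mul_eq_zero.mp h2).resolve_left h

/-- the SDCF axiom scheme -/
def SDCFAx (δ : Derivation ℤ K K) : Prop :=
  ∀ f g : MvPolynomial ℕ K, f ≠ 0 → g ≠ 0 → sep f ≠ 0 → ordOf g < ordOf f →
    ∃ a : K, evalD δ a f = 0 ∧ evalD δ a g ≠ 0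

/-!
Let `c` be a constant of `L` and `f = minpoly K c`. Differentiating `f(c) = 0` shows that the
coefficientwise derivative of `f` vanishes at `c`; it has smaller degree than `f`, so it is zero
and `f` has constant coefficients. Hence `c` is separable over `M = L^p · C_K`, while `c ^ p ∈ M`
makes it purely inseparable over `M`, so `c ∈ M`.
-/

open Polynomial Differential

section
variable {F E : Type*} [Field F] [Ring E] [IsDomain E] [Algebra F E]

theorem IsSeparable.mem_range_of_pow_mem (q : ℕ) [ExpChar F q] {x : E}
    (hsep : IsSeparable F x) {n : ℕ} (h : x ^ q ^ n ∈ (algebraMap F E).range) :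
    x ∈ (algebraMap F E).range := by
  have hdeg := (minpoly.natSepDegree_eq_one_iff_pow_mem q).2 ⟨n, h⟩
  rw [hsep.natSepDegree_eq_natDegree, minpoly.natDegree_eq_one_iff] at hdeg
  exact hdeg
end

section
variable {F E : Type*} [Field F] [Field E] [Algebra F E]

theorem IsSeparable.of_forall_coeff_minpoly_mem (M : Subfield E) {x : E}
    (hx : IsSeparable F x) (hcoeff : ∀ i, algebraMap F E ((minpoly F x).coeff i) ∈ M) :
    IsSeparable M x := by
  obtain ⟨g, hg⟩ : (minpoly F x).map (algebraMap F E) ∈ lifts (algebraMap M E) := by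
    rw [lifts_iff_coeff_lifts]
    intro i
    rw [Polynomial.coeff_map]
    exact ⟨⟨_, hcoeff i⟩, rfl⟩
  rw [coe_mapRingHom] at hg
  have hgsep : g.Separable := (separable_map (algebraMap M E)).mp (hg ▸ Separable.map hx)
  have hgx : aeval x g = 0 := by
    rw [Polynomial.aeval_def, ← Polynomial.eval_map, hg, Polynomial.eval_map,
      ← Polynomial.aeval_def, minpoly.aeval]
  exact hgsep.of_dvd (minpoly.dvd M x hgx)

variable [Differential F] [Differential E] [DifferentialAlgebra F E]

theorem deriv_coeff_minpoly_eq_zero {x : E} (hx : IsIntegral F x) (h : x′ = 0) (i : ℕ) :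
    ((minpoly F x).coeff i)′ = 0 := by
  set f := minpoly F x
  have hroot : aeval x (mapCoeffs f) = 0 := by
    simpa [h, f, eq_comm] using deriv_aeval_eq x f
  have hdeg : (mapCoeffs f).degree < f.degree := by
    rw [degree_eq_natDegree (minpoly.ne_zero hx), degree_lt_iff_coeff_zero]
    intro m hm
    rw [coeff_mapCoeffs]
    rcases hm.eq_or_lt with hm | hm
    · rw [← hm, (minpoly.monic hx).coeff_natDegree, Derivation.map_one_eq_zero]
    · rw [coeff_eq_zero_of_natDegree_lt hm, map_zero]
  have hzero : mapCoeffs f = 0 := by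
    by_contra hne
    exact hdeg.not_ge (minpoly.degree_le_of_ne_zero F x hne hroot)
  rw [← coeff_mapCoeffs, hzero, Polynomial.coeff_zero]

theorem mem_subfield_of_deriv_eq_zero (p : ℕ) [ExpChar E p] (M : Subfield E)
    (hpow : ∀ y : E, y ^ p ∈ M) (hconst : ∀ a : F, a′ = 0 → algebraMap F E a ∈ M)
    {c : E} (hsep : IsSeparable F c) (hc : c′ = 0) : c ∈ M := by
  have hsepM : IsSeparable M c := IsSeparable.of_forall_coeff_minpoly_mem M hsep
    fun i ↦ hconst _ (deriv_coeff_minpoly_eq_zero hsep.isIntegral hc i)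
  obtain ⟨y, rfl⟩ := IsSeparable.mem_range_of_pow_mem p hsepM (n := 1)
    ⟨⟨c ^ p, hpow c⟩, by rw [pow_one]; rfl⟩
  exact y.2
end

theorem stmt15 {K : Type*} [Field K] {L : Type*} [Field L] [Algebra K L]
    (p : ℕ) [Fact p.Prime] [CharP L p]
    [Algebra.IsSeparable K L]
    (δ : Derivation ℤ K K) (δL : Derivation ℤ L L)
    (hcomp : ∀ a : K, δL (algebraMap K L a) = algebraMap K L (δ a)) :
    constants δL =
      Subfield.closure
        (((frobenius L p).fieldRange : Set L) ∪ (algebraMap K L '' {a : K | δ a = 0})) := by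
  let : Differential K := ⟨δ⟩
  let : Differential L := ⟨δL⟩
  have : DifferentialAlgebra K L := ⟨hcomp⟩
  apply le_antisymm
  · intro c hc
    apply mem_subfield_of_deriv_eq_zero p _ _ _ (Algebra.IsSeparable.isSeparable K c) hc
    · exact fun y ↦ Subfield.subset_closure (Or.inl ⟨y, rfl⟩)
    · exact fun a ha ↦ Subfield.subset_closure (Or.inr ⟨a, ha, rfl⟩)
  · rw [Subfield.closure_le]
    rintro x (⟨y, rfl⟩ | ⟨a, ha, rfl⟩)
    · show δL (y ^ p) = 0
      rw [Derivation.leibniz_pow, nsmul_eq_mul, CharP.cast_eq_zero L p, zero_mul]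
    · show δL (algebraMap K L a) = 0
      rw [hcomp, ha, map_zero]
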